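/- Let μ be a translation-invariant and reflection-invariant probability measure on {0,?,1}^ℤ. Then μ(?) + μ(0?) + μ(00?) ≥ μ({0,?}⟨***⟩) + 2μ(1⟨***⟩) - μ(100?) + μ(1?) + 2μ(1?01) + μ(1??1), where ⟨***⟩ denotes three consecutive coordinates in {0,?}³ \ {(0,0,0)}, μ({0,?}⟨***⟩) is the probability that one coordinate lies in {0,?} and the next three form a ⟨***⟩-event, and concatenated strings denote cylinder events. -/

import Mathlib

open MeasureTheory

inductive PSym : Type
  | zero : PSym
  | quest : PSym
  | one : PSym
deriving DecidableEq

instance : Fintype PSym :=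
  ⟨{PSym.zero, PSym.quest, PSym.one}, fun x => by cases x <;> simp⟩

instance : MeasurableSpace PSym := ⊤

abbrev Config : Type := ℤ → PSym

open PSym

/-- the symbol lies in `{0, ?}` -/
def lowQ (a : PSym) : Prop := a = PSym.zero ∨ a = PSym.quest

instance : DecidablePred lowQ := fun a => by unfold lowQ; infer_instance

/-- the window `(η k, η (k+1))` lies in `{0,?}² \ {(0,0)}` -/
def star2 (η : Config) (k : ℤ) : Prop :=
  lowQ (η k) ∧ lowQ (η (k + 1)) ∧ ¬(η k = PSym.zero ∧ η (k + 1) = PSym.zero)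

/-- the window `(η k, η (k+1), η (k+2))` lies in `{0,?}³ \ {(0,0,0)}` -/
def star3 (η : Config) (k : ℤ) : Prop :=
  lowQ (η k) ∧ lowQ (η (k + 1)) ∧ lowQ (η (k + 2)) ∧
    ¬(η k = PSym.zero ∧ η (k + 1) = PSym.zero ∧ η (k + 2) = PSym.zero)

/-- translation by `k` -/
def shiftBy (k : ℤ) (η : Config) : Config := fun n => η (n + k)

/-- reflection -/
def reflect (η : Config) : Config := fun n => η (-n)

/-! All events involved depend only on the window `(η 0, η 1, η 2, η 3)` once the short events
(those of the left side and `1?`) are shifted one step to the right. Hence both sides are sums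
`∑ w, c w * p w` over the 81 words `w`, with `p` the law of the window and integer
coefficients `c`.
Reflection followed by a shift by 3 reverses the window, so `p` is invariant under reversal of
words and each coefficient may be replaced by its average over `w` and its reverse; for the
averaged coefficients the inequality holds word by word, which is a finite check. -/

theorem Fintype.sum_mul_le_sum_mul_of_add_comp_le {α : Type*} [Fintype α] (e : α ≃ α)
    {p f g : α → ℝ} (hp : ∀ a, 0 ≤ p a) (hpe : ∀ a, p (e a) = p a)
    (hfg : ∀ a, g a + g (e a) ≤ f a + f (e a)) :
    ∑ a, g a * p a ≤ ∑ a, f a * p a := by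
  have hsymm (h : α → ℝ) : 2 * ∑ a, h a * p a = ∑ a, (h a + h (e a)) * p a := by
    calc 2 * ∑ a, h a * p a = ∑ a, h a * p a + ∑ a, h (e a) * p (e a) := by
          rw [e.sum_comp fun a => h a * p a]; ring
      _ = ∑ a, (h a + h (e a)) * p a := by
          simp only [hpe, add_mul, Finset.sum_add_distrib]
  have hle : ∑ a, (g a + g (e a)) * p a ≤ ∑ a, (f a + f (e a)) * p a :=
    Finset.sum_le_sum fun a _ => mul_le_mul_of_nonneg_right (hfg a) (hp a)
  linarith [hsymm f, hsymm g]

abbrev Word : Type := PSym × PSym × PSym × PSym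

def Word.rev (w : Word) : Word := (w.2.2.2, w.2.2.1, w.2.1, w.1)

theorem Word.rev_involutive : Function.Involutive Word.rev := fun _ => rfl

def window (η : Config) : Word := (η 0, η 1, η 2, η 3)

theorem measurable_window : Measurable window := by
  unfold window; fun_prop

theorem measurable_shiftBy (k : ℤ) : Measurable (shiftBy k) :=
  measurable_pi_lambda _ fun _ => measurable_pi_apply _

theorem measurable_reflect : Measurable reflect :=
  measurable_pi_lambda _ fun _ => measurable_pi_apply _

theorem window_shiftBy_reflect (η : Config) :
    window (shiftBy (-3) (reflect η)) = (window η).rev := by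
  simp only [window, shiftBy, reflect, Word.rev]
  norm_num

noncomputable def windowWeight (μ : Measure Config) (w : Word) : ℝ := μ.real (window ⁻¹' {w})

theorem measureReal_setOf_window (μ : Measure Config) [IsFiniteMeasure μ]
    (Q : Word → Prop) [DecidablePred Q] :
    μ.real {η | Q (window η)} = ∑ w, if Q w then windowWeight μ w else 0 := by
  simp only [windowWeight]
  rw [← Finset.sum_filter, sum_measureReal_preimage_singleton _
    fun _ _ => measurable_window (measurableSet_singleton _)]
  congr with η
  simp

section Invariance

variable {μ : Measure Config}

theorem measurePreserving_shiftBy (hshift : ∀ k : ℤ, Measure.map (shiftBy k) μ = μ)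
    (k : ℤ) :
    MeasurePreserving (shiftBy k) μ μ :=
  ⟨measurable_shiftBy k, hshift k⟩

theorem measureReal_setOf_window_shiftBy [IsFiniteMeasure μ]
    (hshift : ∀ k : ℤ, Measure.map (shiftBy k) μ = μ) (k : ℤ)
    (Q : Word → Prop) [DecidablePred Q] :
    μ.real {η | Q (window (shiftBy k η))} = ∑ w, if Q w then windowWeight μ w else 0 :=
  ((measurePreserving_shiftBy hshift k).measureReal_preimage
    (measurable_window (Set.toFinite {w | Q w}).measurableSet).nullMeasurableSet).trans
    (measureReal_setOf_window μ Q)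

theorem windowWeight_rev (hshift : ∀ k : ℤ, Measure.map (shiftBy k) μ = μ)
    (hrefl : Measure.map reflect μ = μ) (w : Word) :
    windowWeight μ w.rev = windowWeight μ w := by
  have h : MeasurePreserving (shiftBy (-3) ∘ reflect) μ μ :=
    (measurePreserving_shiftBy hshift (-3)).comp ⟨measurable_reflect, hrefl⟩
  have hpre : shiftBy (-3) ∘ reflect ⁻¹' (window ⁻¹' {w}) = window ⁻¹' {w.rev} := by
    ext η
    simp [window_shiftBy_reflect, Word.rev_involutive.eq_iff]
  rw [windowWeight, windowWeight, ← hpre]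
  exact h.measureReal_preimage (measurable_window (measurableSet_singleton w)).nullMeasurableSet

end Invariance


-- Among the placements of the short events in the window, essentially only this one (all at
-- offset 1) makes `rhsCoeff_add_rev_le` true.
def lhsCoeff (w : Word) : ℤ :=
  (if w.2.1 = quest then 1 else 0)
  + (if w.2.1 = zero ∧ w.2.2.1 = quest then 1 else 0)
  + (if w.2.1 = zero ∧ w.2.2.1 = zero ∧ w.2.2.2 = quest then 1 else 0)

def rhsCoeff (w : Word) : ℤ :=
  (if lowQ w.1 ∧ lowQ w.2.1 ∧ lowQ w.2.2.1 ∧ lowQ w.2.2.2 ∧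
      ¬(w.2.1 = zero ∧ w.2.2.1 = zero ∧ w.2.2.2 = zero) then 1 else 0)
  + 2 * (if w.1 = one ∧ lowQ w.2.1 ∧ lowQ w.2.2.1 ∧ lowQ w.2.2.2 ∧
      ¬(w.2.1 = zero ∧ w.2.2.1 = zero ∧ w.2.2.2 = zero) then 1 else 0)
  - (if w.1 = one ∧ w.2.1 = zero ∧ w.2.2.1 = zero ∧ w.2.2.2 = quest then 1 else 0)
  + (if w.2.1 = one ∧ w.2.2.1 = quest then 1 else 0)
  + 2 * (if w.1 = one ∧ w.2.1 = quest ∧ w.2.2.1 = zero ∧ w.2.2.2 = one then 1 else 0)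
  + (if w.1 = one ∧ w.2.1 = quest ∧ w.2.2.1 = quest ∧ w.2.2.2 = one then 1 else 0)

theorem rhsCoeff_add_rev_le (w : Word) :
    rhsCoeff w + rhsCoeff w.rev ≤ lhsCoeff w + lhsCoeff w.rev := by
  revert w; decide

section Events

variable {μ : Measure Config} [IsFiniteMeasure μ]

theorem lhs_eq_sum (hshift : ∀ k : ℤ, Measure.map (shiftBy k) μ = μ) :
    (μ {η | η 0 = quest}).toReal + (μ {η | η 0 = zero ∧ η 1 = quest}).toReal +
        (μ {η | η 0 = zero ∧ η 1 = zero ∧ η 2 = quest}).toReal =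
      ∑ w, (lhsCoeff w : ℝ) * windowWeight μ w := by
  simp only [lhsCoeff, Int.cast_add, Int.cast_ite, Int.cast_one, Int.cast_zero, add_mul,
    ite_mul, one_mul, zero_mul, Finset.sum_add_distrib,
    ← measureReal_setOf_window_shiftBy hshift (-1)]
  norm_num [window, shiftBy, measureReal_def]

theorem rhs_eq_sum (hshift : ∀ k : ℤ, Measure.map (shiftBy k) μ = μ) :
    (μ {η | lowQ (η 0) ∧ star3 η 1}).toReal +
        2 * (μ {η | η 0 = one ∧ star3 η 1}).toReal -
        (μ {η | η 0 = one ∧ η 1 = zero ∧ η 2 = zero ∧ η 3 = quest}).toReal +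
        (μ {η | η 0 = one ∧ η 1 = quest}).toReal +
        2 * (μ {η | η 0 = one ∧ η 1 = quest ∧ η 2 = zero ∧ η 3 = one}).toReal +
        (μ {η | η 0 = one ∧ η 1 = quest ∧ η 2 = quest ∧ η 3 = one}).toReal =
      ∑ w, (rhsCoeff w : ℝ) * windowWeight μ w := by
  simp only [rhsCoeff, Int.cast_add, Int.cast_sub, Int.cast_mul, Int.cast_ofNat, Int.cast_ite,
    Int.cast_one, Int.cast_zero, add_mul, sub_mul, mul_assoc, ite_mul, one_mul, zero_mul,
    Finset.sum_add_distrib, Finset.sum_sub_distrib, ← Finset.mul_sum]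
  rw [← measureReal_setOf_window_shiftBy hshift (-1) fun w => w.2.1 = one ∧ w.2.2.1 = quest]
  simp only [← measureReal_setOf_window]
  norm_num [window, shiftBy, measureReal_def, star3]

end Events

theorem stmt10 (μ : Measure Config) [IsProbabilityMeasure μ]
    (hshift : ∀ k : ℤ, Measure.map (shiftBy k) μ = μ)
    (hrefl : Measure.map reflect μ = μ) :
    (μ {η | η 0 = quest}).toReal + (μ {η | η 0 = zero ∧ η 1 = quest}).toReal +
        (μ {η | η 0 = zero ∧ η 1 = zero ∧ η 2 = quest}).toReal ≥
      (μ {η | lowQ (η 0) ∧ star3 η 1}).toReal +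
        2 * (μ {η | η 0 = one ∧ star3 η 1}).toReal -
        (μ {η | η 0 = one ∧ η 1 = zero ∧ η 2 = zero ∧ η 3 = quest}).toReal +
        (μ {η | η 0 = one ∧ η 1 = quest}).toReal +
        2 * (μ {η | η 0 = one ∧ η 1 = quest ∧ η 2 = zero ∧ η 3 = one}).toReal +
        (μ {η | η 0 = one ∧ η 1 = quest ∧ η 2 = quest ∧ η 3 = one}).toReal := by
  rw [ge_iff_le, lhs_eq_sum hshift, rhs_eq_sum hshift]
  exact Fintype.sum_mul_le_sum_mul_of_add_comp_le Word.rev_involutive.toPerm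
    (fun _ => measureReal_nonneg) (windowWeight_rev hshift hrefl)
    fun w => mod_cast rhsCoeff_add_rev_le w
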